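/- For any real γ > 1 and any z, Δ ∈ ℝ, it holds that ln( (1 + |z+Δ|^γ)/(1 + |z|^γ) ) ≤ |Δ| · (γ-1)^{(γ-1)/γ}. Consequently, if |Δ| ≤ ε / (2 (γ-1)^{(γ-1)/γ}) for some ε > 0, then ln( (1 + |z+Δ|^γ)/(1 + |z|^γ) ) ≤ ε/2. -/

import Mathlib

/-!
The bound follows from the mean value theorem applied to `t ↦ log (1 + t ^ γ)` on `[0, ∞)`,
evaluated at `|z|` and `|z + Δ|`, which are at distance at most `|Δ|`. Its derivative
`γ t^(γ-1) / (1 + t^γ)` is at most `(γ-1)^((γ-1)/γ)` by Young's inequality with exponents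
`γ` and `γ/(γ-1)`.
-/

open Real Set

lemma mul_rpow_sub_one_le {γ t : ℝ} (hγ : 1 < γ) (ht : 0 ≤ t) :
    γ * t ^ (γ - 1) ≤ (γ - 1) ^ ((γ - 1) / γ) * (1 + t ^ γ) := by
  have hγ₀ : 0 < γ := by linarith
  have hγ₁ : 0 < γ - 1 := by linarith
  set k := (γ - 1) ^ γ⁻¹ with hk
  have hk₀ : 0 < k := rpow_pos_of_pos hγ₁ _
  -- `k` is chosen so that `k ^ γ = γ - 1`, balancing the two terms of Young's inequality
  have young := young_inequality_of_nonneg hk₀.le (rpow_nonneg ht (γ - 1))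
    ((holderConjugate_iff_eq_conjExponent hγ).2 rfl)
  have hkγ : k ^ γ = γ - 1 := by
    rw [hk, ← rpow_mul hγ₁.le, inv_mul_cancel₀ hγ₀.ne', rpow_one]
  have htq : (t ^ (γ - 1)) ^ (γ / (γ - 1)) = t ^ γ := by
    rw [← rpow_mul ht, mul_div_cancel₀ _ hγ₁.ne']
  have hLk : (γ - 1) ^ ((γ - 1) / γ) * k = γ - 1 := by
    rw [hk, ← rpow_add hγ₁, show (γ - 1) / γ + γ⁻¹ = 1 by field_simp; ring, rpow_one]
  rw [hkγ, htq] at young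
  have : k * (γ * t ^ (γ - 1)) ≤ k * ((γ - 1) ^ ((γ - 1) / γ) * (1 + t ^ γ)) := by
    calc k * (γ * t ^ (γ - 1)) = γ * (k * t ^ (γ - 1)) := by ring
      _ ≤ γ * ((γ - 1) / γ + t ^ γ / (γ / (γ - 1))) := by gcongr
      _ = (γ - 1) * (1 + t ^ γ) := by field_simp
      _ = _ := by rw [← mul_assoc, mul_comm k, hLk]
  exact le_of_mul_le_mul_left this hk₀

lemma hasDerivAt_log_one_add_rpow {γ t : ℝ} (hγ : 1 ≤ γ) (ht : 0 ≤ t) :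
    HasDerivAt (fun x => log (1 + x ^ γ)) (γ * t ^ (γ - 1) / (1 + t ^ γ)) t := by
  have hpos : 0 < 1 + t ^ γ := by positivity
  simpa using ((hasDerivAt_rpow_const (Or.inr hγ)).const_add 1).log hpos.ne'

lemma abs_log_one_add_rpow_sub_le {γ a b : ℝ} (hγ : 1 < γ) (ha : 0 ≤ a) (hb : 0 ≤ b) :
    |log (1 + b ^ γ) - log (1 + a ^ γ)| ≤ (γ - 1) ^ ((γ - 1) / γ) * |b - a| := by
  refine (convex_Ici 0).norm_image_sub_le_of_norm_hasDerivWithin_le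
    (fun t ht => (hasDerivAt_log_one_add_rpow hγ.le ht).hasDerivWithinAt) (fun t ht => ?_)
    (mem_Ici.2 ha) (mem_Ici.2 hb)
  have ht : 0 ≤ t := ht
  have hpos : 0 < 1 + t ^ γ := by positivity
  rw [Real.norm_eq_abs, abs_of_nonneg (by positivity), div_le_iff₀ hpos]
  exact mul_rpow_sub_one_le hγ ht

lemma log_one_add_abs_rpow_div_le {γ : ℝ} (hγ : 1 < γ) (z Δ : ℝ) :
    log ((1 + |z + Δ| ^ γ) / (1 + |z| ^ γ)) ≤ |Δ| * (γ - 1) ^ ((γ - 1) / γ) := by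
  rw [log_div (by positivity) (by positivity), mul_comm]
  calc _ ≤ |log (1 + |z + Δ| ^ γ) - log (1 + |z| ^ γ)| := le_abs_self _
    _ ≤ (γ - 1) ^ ((γ - 1) / γ) * |(|z + Δ| - |z|)| :=
        abs_log_one_add_rpow_sub_le hγ (abs_nonneg _) (abs_nonneg _)
    _ ≤ (γ - 1) ^ ((γ - 1) / γ) * |Δ| := by
        gcongr ?_ * ?_
        simpa using abs_abs_sub_abs_le_abs_sub (z + Δ) z

/-- Sliding-property bound for the density `h(z) ∝ 1/(1+|z|^γ)`:
`ln((1 + |z+Δ|^γ)/(1 + |z|^γ)) ≤ |Δ|·(γ-1)^((γ-1)/γ)`, and consequently, if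
`|Δ| ≤ ε/(2(γ-1)^((γ-1)/γ))` with `ε > 0`, the log-ratio is at most `ε/2`. -/
theorem stmt3 (γ z Δ : ℝ) (hγ : 1 < γ) :
    Real.log ((1 + |z + Δ| ^ γ) / (1 + |z| ^ γ)) ≤ |Δ| * (γ - 1) ^ ((γ - 1) / γ) ∧
    ∀ ε : ℝ, 0 < ε → |Δ| ≤ ε / (2 * (γ - 1) ^ ((γ - 1) / γ)) →
      Real.log ((1 + |z + Δ| ^ γ) / (1 + |z| ^ γ)) ≤ ε / 2 := by
  have hL : 0 < (γ - 1) ^ ((γ - 1) / γ) := rpow_pos_of_pos (by linarith) _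
  refine ⟨log_one_add_abs_rpow_div_le hγ z Δ, fun ε _ hΔ => ?_⟩
  calc _ ≤ |Δ| * (γ - 1) ^ ((γ - 1) / γ) := log_one_add_abs_rpow_div_le hγ z Δ
    _ ≤ ε / (2 * (γ - 1) ^ ((γ - 1) / γ)) * (γ - 1) ^ ((γ - 1) / γ) := by gcongr
    _ = ε / 2 := by field_simp
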